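/- arXiv:1606.08162 — 8 statements merged into one kernel-verified Lean document; each statement's English description precedes it below -/
import Mathlib

section
/- Let m₀, i : ℝ → ℝ → ℝ be continuous and S₀ : ℝ → ℝ. Define S(t,a) := S₀(t−a)·exp(−∫₀ᵃ (m₀(t−a+τ,τ) + i(t−a+τ,τ)) dτ). Then for every (t,a) ∈ ℝ², the function s ↦ S(t+s, a+s) has derivative −(m₀(t,a) + i(t,a))·S(t,a) at s = 0, and S(u,0) = S₀(u) for every u ∈ ℝ. (That is, S solves the Cauchy problem (∂ₜ+∂ₐ)S = −(m₀+i)·S with initial condition S(t−a,0) = S₀(t−a).) -/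
/-!
Along a characteristic `s ↦ (t + s, a + s)` the birth date `t - a` is constant, so there
`S = S₀(t - a) · exp(-∫₀^{a+s} g)` with `g` the total exit rate on that characteristic, and the
fundamental theorem of calculus differentiates the exponent.
-/

theorem Continuous.along_characteristic {f : ℝ → ℝ → ℝ}
    (hf : Continuous fun q : ℝ × ℝ => f q.1 q.2) (c : ℝ) :
    Continuous fun τ => f (c + τ) τ :=
  hf.comp (by fun_prop : Continuous fun τ : ℝ => (c + τ, τ))

theorem Continuous.hasDerivAt_exp_neg_integral {g : ℝ → ℝ} (hg : Continuous g) (b x : ℝ) :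
    HasDerivAt (fun y => Real.exp (-∫ τ in b..y, g τ))
      (-g x * Real.exp (-∫ τ in b..x, g τ)) x := by
  simpa [mul_comm] using (hg.integral_hasStrictDerivAt b x).hasDerivAt.neg.exp

/-- The function `S(t,a) = S₀(t−a)·exp(−∫₀ᵃ (m₀(t−a+τ,τ) + i(t−a+τ,τ)) dτ)` solves
the Cauchy problem `(∂ₜ+∂ₐ)S = −(m₀+i)·S` with initial condition `S(u,0) = S₀(u)`. -/
theorem keiding_S_solves_cauchy_problem
    (m₀ i : ℝ → ℝ → ℝ)
    (hm₀ : Continuous fun q : ℝ × ℝ => m₀ q.1 q.2)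
    (hi : Continuous fun q : ℝ × ℝ => i q.1 q.2)
    (S₀ : ℝ → ℝ) (S : ℝ → ℝ → ℝ)
    (hS : ∀ t a : ℝ, S t a = S₀ (t - a) *
      Real.exp (-∫ τ in (0:ℝ)..a, (m₀ (t - a + τ) τ + i (t - a + τ) τ))) :
    (∀ t a : ℝ, HasDerivAt (fun s : ℝ => S (t + s) (a + s))
      (-(m₀ t a + i t a) * S t a) 0) ∧
    (∀ u : ℝ, S u 0 = S₀ u) := by
  refine ⟨fun t a => ?_, fun u => by simp [hS u 0]⟩
  set g : ℝ → ℝ := fun τ => m₀ (t - a + τ) τ + i (t - a + τ) τ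
  have hg : Continuous g := (hm₀.along_characteristic _).add (hi.along_characteristic _)
  have h_char : (fun s => S (t + s) (a + s)) =
      fun s => S₀ (t - a) * Real.exp (-∫ τ in (0:ℝ)..(a + s), g τ) := by
    funext s
    rw [hS, show t + s - (a + s) = t - a by ring]
  have h_rate : g a = m₀ t a + i t a := by simp only [g, sub_add_cancel]
  have h_deriv := ((hg.hasDerivAt_exp_neg_integral 0 (a + 0)).comp_const_add a 0).const_mul
    (S₀ (t - a))
  rw [add_zero, h_rate] at h_deriv
  rw [h_char, hS t a]
  exact h_deriv.congr_deriv (by simp only [g]; ring)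
end

section
/- Let m₀, i : ℝ → ℝ → ℝ be continuous with i ≥ 0, m₁ : ℝ → ℝ → ℝ → ℝ be continuous, and S₀ : ℝ → ℝ. Define S(t,a) := S₀(t−a)·exp(−∫₀ᵃ (m₀(t−a+τ,τ) + i(t−a+τ,τ)) dτ), M₁(t,a,d) := ∫₀^d m₁(t−d+τ, a−d+τ, τ) dτ, C(t,a,d) := i(t−d, a−d)·S(t−d, a−d)·exp(−M₁(t,a,d)), C⋆(t,a) := ∫₀ᵃ C(t,a,δ) dδ, the prevalence p(t,a) := C⋆(t,a)/(C⋆(t,a) + S(t,a)), and ℳ_{t,a}(y) := exp(−∫₀^y (m₀(t−a+τ,τ) + i(t−a+τ,τ)) dτ). Then for every t ∈ ℝ and a ≥ 0 with S₀(t−a) > 0, Keiding's equation holds: p(t,a)/(1 − p(t,a)) = (∫₀ᵃ ℳ_{t,a}(y)·i(t−a+y, y)·exp(−∫_y^a m₁(t−a+τ, τ, τ−y) dτ) dy) / ℳ_{t,a}(a). -/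
/-!
Everybody aged `a` at time `t` was born at `t - a`, so all quantities can be read along that
birth cohort. Its susceptibles are `S₀ (t - a) * ℳ_{t,a}(a)`, and the persons diseased for
`a - y` time units fell ill at age `y`, which contributes
`S₀ (t - a) * ℳ_{t,a}(y) * i(t - a + y, y) * exp (-∫_y^a m₁)` after substituting `δ = a - y`.
Hence `C⋆(t,a)` and `S(t,a)` share the factor `S₀ (t - a)`, and the prevalence odds `C⋆ / S`
are the quotient in Keiding's equation.
-/

open intervalIntegral

theorem div_div_one_sub_div_add {K : Type*} [Field K] {c s : K} (hcs : c + s ≠ 0) :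
    c / (c + s) / (1 - c / (c + s)) = c / s := by
  rw [one_sub_div hcs, add_sub_cancel_left, div_div_div_cancel_right₀ hcs]

theorem integral_duration_eq_integral_age (f : ℝ → ℝ → ℝ → ℝ) (t a y : ℝ) :
    ∫ τ in (0:ℝ)..(a - y), f (t - (a - y) + τ) (a - (a - y) + τ) τ =
      ∫ τ in y..a, f (t - a + τ) τ (τ - y) := by
  have hshift := integral_comp_add_right (a := 0) (b := a - y)
    (fun τ => f (t - a + τ) τ (τ - y)) y
  rw [zero_add, sub_add_cancel] at hshift
  rw [← hshift]
  refine integral_congr fun τ _ => ?_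
  congr 1 <;> ring

theorem keiding_equation_general
    (m₀ i : ℝ → ℝ → ℝ)
    (hi_nonneg : ∀ t a : ℝ, 0 ≤ i t a)
    (m₁ : ℝ → ℝ → ℝ → ℝ)
    (S₀ : ℝ → ℝ) (S : ℝ → ℝ → ℝ)
    (hS : ∀ t a : ℝ, S t a = S₀ (t - a) *
      Real.exp (-∫ τ in (0:ℝ)..a, (m₀ (t - a + τ) τ + i (t - a + τ) τ)))
    (M₁ : ℝ → ℝ → ℝ → ℝ)
    (hM₁ : ∀ t a d : ℝ, M₁ t a d =
      ∫ τ in (0:ℝ)..d, m₁ (t - d + τ) (a - d + τ) τ)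
    (C : ℝ → ℝ → ℝ → ℝ)
    (hC : ∀ t a d : ℝ, C t a d =
      i (t - d) (a - d) * S (t - d) (a - d) * Real.exp (-M₁ t a d))
    (Cstar : ℝ → ℝ → ℝ)
    (hCstar : ∀ t a : ℝ, Cstar t a = ∫ δ in (0:ℝ)..a, C t a δ)
    (p : ℝ → ℝ → ℝ)
    (hp : ∀ t a : ℝ, p t a = Cstar t a / (Cstar t a + S t a))
    (M : ℝ → ℝ → ℝ → ℝ)
    (hM : ∀ t a y : ℝ, M t a y =
      Real.exp (-∫ τ in (0:ℝ)..y, (m₀ (t - a + τ) τ + i (t - a + τ) τ))) :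
    ∀ t a : ℝ, 0 ≤ a → 0 < S₀ (t - a) →
      p t a / (1 - p t a) =
        (∫ y in (0:ℝ)..a, M t a y * i (t - a + y) y *
          Real.exp (-∫ τ in y..a, m₁ (t - a + τ) τ (τ - y))) / M t a a := by
  intro t a ha hS₀
  set K := ∫ y in (0:ℝ)..a, M t a y * i (t - a + y) y *
    Real.exp (-∫ τ in y..a, m₁ (t - a + τ) τ (τ - y))
  have hS_cohort (y : ℝ) : S (t - a + y) y = S₀ (t - a) * M t a y := by
    rw [hS, hM, add_sub_cancel_right]
  have hC_cohort (y : ℝ) : C t a (a - y) = S₀ (t - a) *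
      (M t a y * i (t - a + y) y * Real.exp (-∫ τ in y..a, m₁ (t - a + τ) τ (τ - y))) := by
    rw [hC, hM₁, integral_duration_eq_integral_age, sub_sub_cancel, ← sub_add, hS_cohort]
    ring
  have hCstar_eq : Cstar t a = S₀ (t - a) * K := by
    have hreflect := integral_comp_sub_left (fun δ => C t a δ) a (a := 0) (b := a)
    rw [sub_self, sub_zero] at hreflect
    rw [hCstar, ← hreflect, ← integral_const_mul]
    exact integral_congr fun y _ => hC_cohort y
  have hK_nonneg : 0 ≤ K := by
    refine integral_nonneg ha fun y _ => ?_
    have := hi_nonneg (t - a + y) y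
    rw [hM]
    positivity
  have hS_eq : S t a = S₀ (t - a) * M t a a := by rw [hS, hM]
  have hS_pos : 0 < S t a := hS_eq ▸ mul_pos hS₀ (hM t a a ▸ Real.exp_pos _)
  have hCstar_nonneg : 0 ≤ Cstar t a := hCstar_eq ▸ mul_nonneg hS₀.le hK_nonneg
  rw [hp, div_div_one_sub_div_add (by positivity), hCstar_eq,
    hS_eq, mul_div_mul_left _ _ hS₀.ne']

/-- Keiding's equation for the prevalence odds:
`p(t,a)/(1−p(t,a)) = (∫₀ᵃ ℳ_{t,a}(y)·i(t−a+y,y)·exp(−∫_y^a m₁(t−a+τ,τ,τ−y) dτ) dy) / ℳ_{t,a}(a)`. -/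
theorem keiding_equation
    (m₀ i : ℝ → ℝ → ℝ)
    (hm₀ : Continuous fun q : ℝ × ℝ => m₀ q.1 q.2)
    (hi : Continuous fun q : ℝ × ℝ => i q.1 q.2)
    (hi_nonneg : ∀ t a : ℝ, 0 ≤ i t a)
    (m₁ : ℝ → ℝ → ℝ → ℝ)
    (hm₁ : Continuous fun q : ℝ × ℝ × ℝ => m₁ q.1 q.2.1 q.2.2)
    (S₀ : ℝ → ℝ) (S : ℝ → ℝ → ℝ)
    (hS : ∀ t a : ℝ, S t a = S₀ (t - a) *
      Real.exp (-∫ τ in (0:ℝ)..a, (m₀ (t - a + τ) τ + i (t - a + τ) τ)))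
    (M₁ : ℝ → ℝ → ℝ → ℝ)
    (hM₁ : ∀ t a d : ℝ, M₁ t a d =
      ∫ τ in (0:ℝ)..d, m₁ (t - d + τ) (a - d + τ) τ)
    (C : ℝ → ℝ → ℝ → ℝ)
    (hC : ∀ t a d : ℝ, C t a d =
      i (t - d) (a - d) * S (t - d) (a - d) * Real.exp (-M₁ t a d))
    (Cstar : ℝ → ℝ → ℝ)
    (hCstar : ∀ t a : ℝ, Cstar t a = ∫ δ in (0:ℝ)..a, C t a δ)
    (p : ℝ → ℝ → ℝ)
    (hp : ∀ t a : ℝ, p t a = Cstar t a / (Cstar t a + S t a))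
    (M : ℝ → ℝ → ℝ → ℝ)
    (hM : ∀ t a y : ℝ, M t a y =
      Real.exp (-∫ τ in (0:ℝ)..y, (m₀ (t - a + τ) τ + i (t - a + τ) τ))) :
    ∀ t a : ℝ, 0 ≤ a → 0 < S₀ (t - a) →
      p t a / (1 - p t a) =
        (∫ y in (0:ℝ)..a, M t a y * i (t - a + y) y *
          Real.exp (-∫ τ in y..a, m₁ (t - a + τ) τ (τ - y))) / M t a a :=
  keiding_equation_general m₀ i hi_nonneg m₁ S₀ S hS M₁ hM₁ C hC Cstar hCstar p hp M hM
end

section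
/- Let m₀, i : ℝ → ℝ → ℝ be continuous with i ≥ 0, m₁ : ℝ → ℝ → ℝ → ℝ be continuous, and S₀ : ℝ → ℝ. Define S(t,a) := S₀(t−a)·exp(−∫₀ᵃ (m₀(t−a+τ,τ) + i(t−a+τ,τ)) dτ), M₁(t,a,d) := ∫₀^d m₁(t−d+τ, a−d+τ, τ) dτ, C(t,a,d) := i(t−d, a−d)·S(t−d, a−d)·exp(−M₁(t,a,d)), C⋆(t,a) := ∫₀ᵃ C(t,a,δ) dδ, the prevalence p(t,a) := C⋆(t,a)/(C⋆(t,a) + S(t,a)), and ℳ_{t,a}(y) := exp(−∫₀^y (m₀(t−a+τ,τ) + i(t−a+τ,τ)) dτ). Then for every t ∈ ℝ and a ≥ 0 with S₀(t−a) > 0: p(t,a) = (∫₀ᵃ i(t−δ, a−δ)·ℳ_{t,a}(a−δ)·exp(−M₁(t,a,δ)) dδ) / (ℳ_{t,a}(a) + ∫₀ᵃ i(t−δ, a−δ)·ℳ_{t,a}(a−δ)·exp(−M₁(t,a,δ)) dδ). -/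
/-- Explicit expression for the age-specific prevalence:
`p(t,a) = (∫₀ᵃ i(t−δ,a−δ)·ℳ_{t,a}(a−δ)·exp(−M₁(t,a,δ)) dδ) /
          (ℳ_{t,a}(a) + ∫₀ᵃ i(t−δ,a−δ)·ℳ_{t,a}(a−δ)·exp(−M₁(t,a,δ)) dδ)`. -/
theorem keiding_prevalence_formula
    (m₀ i : ℝ → ℝ → ℝ)
    (hm₀ : Continuous fun q : ℝ × ℝ => m₀ q.1 q.2)
    (hi : Continuous fun q : ℝ × ℝ => i q.1 q.2)
    (hi_nonneg : ∀ t a : ℝ, 0 ≤ i t a)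
    (m₁ : ℝ → ℝ → ℝ → ℝ)
    (hm₁ : Continuous fun q : ℝ × ℝ × ℝ => m₁ q.1 q.2.1 q.2.2)
    (S₀ : ℝ → ℝ) (S : ℝ → ℝ → ℝ)
    (hS : ∀ t a : ℝ, S t a = S₀ (t - a) *
      Real.exp (-∫ τ in (0:ℝ)..a, (m₀ (t - a + τ) τ + i (t - a + τ) τ)))
    (M₁ : ℝ → ℝ → ℝ → ℝ)
    (hM₁ : ∀ t a d : ℝ, M₁ t a d =
      ∫ τ in (0:ℝ)..d, m₁ (t - d + τ) (a - d + τ) τ)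
    (C : ℝ → ℝ → ℝ → ℝ)
    (hC : ∀ t a d : ℝ, C t a d =
      i (t - d) (a - d) * S (t - d) (a - d) * Real.exp (-M₁ t a d))
    (Cstar : ℝ → ℝ → ℝ)
    (hCstar : ∀ t a : ℝ, Cstar t a = ∫ δ in (0:ℝ)..a, C t a δ)
    (p : ℝ → ℝ → ℝ)
    (hp : ∀ t a : ℝ, p t a = Cstar t a / (Cstar t a + S t a))
    (M : ℝ → ℝ → ℝ → ℝ)
    (hM : ∀ t a y : ℝ, M t a y =
      Real.exp (-∫ τ in (0:ℝ)..y, (m₀ (t - a + τ) τ + i (t - a + τ) τ))) :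
    ∀ t a : ℝ, 0 ≤ a → 0 < S₀ (t - a) →
      p t a =
        (∫ δ in (0:ℝ)..a,
            i (t - δ) (a - δ) * M t a (a - δ) * Real.exp (-M₁ t a δ)) /
        (M t a a + ∫ δ in (0:ℝ)..a,
            i (t - δ) (a - δ) * M t a (a - δ) * Real.exp (-M₁ t a δ)) := by
  intro t a ha hS₀
  have key : ∀ δ : ℝ, C t a δ =
      S₀ (t - a) * (i (t - δ) (a - δ) * M t a (a - δ) * Real.exp (-M₁ t a δ)) := by
    intro δ
    have h1 : t - δ - (a - δ) = t - a := by ring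
    rw [hC, hS, hM, h1]
    ring
  have hCs : Cstar t a = S₀ (t - a) *
      ∫ δ in (0:ℝ)..a, i (t - δ) (a - δ) * M t a (a - δ) * Real.exp (-M₁ t a δ) := by
    rw [hCstar]
    simp_rw [key]
    rw [intervalIntegral.integral_const_mul]
  have hSa : S t a = S₀ (t - a) * M t a a := by rw [hS, hM]
  set I := ∫ δ in (0:ℝ)..a, i (t - δ) (a - δ) * M t a (a - δ) * Real.exp (-M₁ t a δ)
  rw [hp, hCs, hSa]
  have : S₀ (t - a) * I + S₀ (t - a) * M t a a = S₀ (t - a) * (M t a a + I) := by ring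
  rw [this, mul_div_mul_left _ _ (ne_of_gt hS₀)]
end

section
/- Let m₀, i, m₁ : ℝ → ℝ → ℝ be continuous (m₁ independent of disease duration) and S₀ : ℝ → ℝ be continuous. Define S(t,a) := S₀(t−a)·exp(−∫₀ᵃ (m₀(t−a+τ,τ) + i(t−a+τ,τ)) dτ) and C⋆(t,a) := ∫₀ᵃ i(t−δ, a−δ)·S(t−δ, a−δ)·exp(−∫₀^δ m₁(t−δ+τ, a−δ+τ) dτ) dδ. Then C⋆(t,0) = 0 for all t, and for every t ∈ ℝ and a > 0 the function s ↦ C⋆(t+s, a+s) has derivative −m₁(t,a)·C⋆(t,a) + i(t,a)·S(t,a) at s = 0. (That is, when the mortality of the diseased is independent of duration, C⋆ solves the Cauchy problem (∂ₜ+∂ₐ)γ = −m₁·γ + i·S with γ(t−a,0) = 0.) -/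
/-!
Along a characteristic `s ↦ (t + s, a + s)`, substitute `δ = σ + s` in the defining integral of
`C⋆(t + s, a + s)`. The lower limit becomes `-s`, the inflow `g(t - σ, a - σ)` no longer depends
on `s`, and the survival factor splits as `exp (-∫₀ˢ M) · exp (∫₀^{-σ} M)` with
`M r = m₁(t + r, a + r)`. So `C⋆(t + s, a + s) = exp (-∫₀ˢ M) · ∫_{-s}^a H` for a continuous `H`
with `H 0 = i(t, a) S(t, a)`, and the product rule together with the fundamental theorem of
calculus gives the derivative `-M 0 · C⋆(t, a) + H 0` at `s = 0`.
-/

open Real intervalIntegral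

noncomputable section

def susceptibles (S₀ : ℝ → ℝ) (μ : ℝ → ℝ → ℝ) (t a : ℝ) : ℝ :=
  S₀ (t - a) * exp (-∫ τ in (0:ℝ)..a, μ (t - a + τ) τ)

def survivingInflow (g m : ℝ → ℝ → ℝ) (t a : ℝ) : ℝ :=
  ∫ δ in (0:ℝ)..a, g (t - δ) (a - δ) * exp (-∫ τ in (0:ℝ)..δ, m (t - δ + τ) (a - δ + τ))

end

theorem continuous_susceptibles_characteristic {S₀ : ℝ → ℝ} {μ : ℝ → ℝ → ℝ} {t a : ℝ}
    (hμ : Continuous fun τ => μ (t - a + τ) τ) :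
    Continuous fun σ => susceptibles S₀ μ (t - σ) (a - σ) := by
  have hcohort : ∀ σ : ℝ, t - σ - (a - σ) = t - a := fun σ => by ring
  simp only [susceptibles, hcohort]
  exact continuous_const.mul <| continuous_exp.comp <| Continuous.neg <|
    (continuous_primitive (hμ.intervalIntegrable) 0).comp (continuous_const.sub continuous_id)

theorem integral_characteristic_shift (m : ℝ → ℝ → ℝ) (t a σ s : ℝ) :
    ∫ τ in (0:ℝ)..(σ + s), m (t - σ + τ) (a - σ + τ) = ∫ r in (-σ)..s, m (t + r) (a + r) := by
  have hshift := integral_comp_sub_right (fun r => m (t + r) (a + r)) (a := 0) (b := σ + s) σ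
  simp only [zero_sub, add_sub_cancel_left] at hshift
  rw [← hshift]
  congr 1 with τ
  ring_nf

theorem survivingInflow_characteristic {g m : ℝ → ℝ → ℝ} {t a : ℝ}
    (hm : ∀ u v : ℝ, IntervalIntegrable (fun r => m (t + r) (a + r)) MeasureTheory.volume u v)
    (s : ℝ) :
    survivingInflow g m (t + s) (a + s) =
      exp (-∫ r in (0:ℝ)..s, m (t + r) (a + r)) *
        ∫ σ in (-s)..a, g (t - σ) (a - σ) * exp (∫ r in (0:ℝ)..(-σ), m (t + r) (a + r)) := by
  have hsub := integral_comp_add_right (a := -s) (b := a) (fun δ => g (t + s - δ) (a + s - δ) *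
    exp (-∫ τ in (0:ℝ)..δ, m (t + s - δ + τ) (a + s - δ + τ))) s
  simp only [neg_add_cancel] at hsub
  rw [survivingInflow, ← hsub, ← integral_const_mul]
  congr 1 with σ
  have hcohort : t + s - (σ + s) = t - σ := by ring
  have hage : a + s - (σ + s) = a - σ := by ring
  rw [hcohort, hage, integral_characteristic_shift, ← integral_interval_sub_left
    (hm 0 s) (hm 0 (-σ)), neg_sub, exp_sub, exp_neg]
  ring

theorem hasDerivAt_integral_neg_left {f : ℝ → ℝ} (hf : Continuous f) (a x : ℝ) :
    HasDerivAt (fun s => ∫ σ in (-s)..a, f σ) (f (-x)) x := by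
  have hleft := integral_hasDerivAt_left (hf.intervalIntegrable (-x) a)
    (hf.stronglyMeasurableAtFilter _ _) hf.continuousAt
  simpa [Function.comp_def] using hleft.comp x (hasDerivAt_neg x)

theorem survivingInflow_hasDerivAt_characteristic {g m : ℝ → ℝ → ℝ} {t a : ℝ}
    (hg : Continuous fun σ => g (t - σ) (a - σ)) (hm : Continuous fun r => m (t + r) (a + r)) :
    HasDerivAt (fun s => survivingInflow g m (t + s) (a + s))
      (-m t a * survivingInflow g m t a + g t a) 0 := by
  have hintegrand : Continuous fun σ => g (t - σ) (a - σ) * exp (∫ r in (0:ℝ)..(-σ), m (t + r) (a + r)) :=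
    hg.mul (continuous_exp.comp ((continuous_primitive hm.intervalIntegrable 0).comp continuous_neg))
  have hsurvival := ((hm.integral_hasStrictDerivAt 0 0).hasDerivAt.neg).exp
  have hprod := hsurvival.mul (hasDerivAt_integral_neg_left hintegrand a 0)
  have hC := survivingInflow_characteristic (g := g) hm.intervalIntegrable 0
  simp only [add_zero, neg_zero, integral_same, exp_zero, one_mul, mul_one, sub_zero, Pi.neg_apply]
    at hprod hC
  rw [funext (survivingInflow_characteristic hm.intervalIntegrable), hC]
  exact hprod

theorem keiding_Cstar_solves_pde_duration_independent_general
    (m₀ i m₁ : ℝ → ℝ → ℝ)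
    (hm₀ : Continuous fun q : ℝ × ℝ => m₀ q.1 q.2)
    (hi : Continuous fun q : ℝ × ℝ => i q.1 q.2)
    (hm₁ : Continuous fun q : ℝ × ℝ => m₁ q.1 q.2)
    (S₀ : ℝ → ℝ)
    (S : ℝ → ℝ → ℝ)
    (hS : ∀ t a : ℝ, S t a = S₀ (t - a) *
      Real.exp (-∫ τ in (0:ℝ)..a, (m₀ (t - a + τ) τ + i (t - a + τ) τ)))
    (Cstar : ℝ → ℝ → ℝ)
    (hCstar : ∀ t a : ℝ, Cstar t a =
      ∫ δ in (0:ℝ)..a, i (t - δ) (a - δ) * S (t - δ) (a - δ) *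
        Real.exp (-∫ τ in (0:ℝ)..δ, m₁ (t - δ + τ) (a - δ + τ))) :
    (∀ t : ℝ, Cstar t 0 = 0) ∧
    (∀ t a : ℝ, 0 < a →
      HasDerivAt (fun s : ℝ => Cstar (t + s) (a + s))
        (-m₁ t a * Cstar t a + i t a * S t a) 0) := by
  obtain rfl : S = susceptibles S₀ (fun t a => m₀ t a + i t a) := funext₂ hS
  obtain rfl : Cstar =
      survivingInflow (fun t a => i t a * susceptibles S₀ (fun t a => m₀ t a + i t a) t a) m₁ :=
    funext₂ hCstar
  refine ⟨fun t => integral_same, fun t a _ => ?_⟩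
  have hμ : Continuous fun τ => m₀ (t - a + τ) τ + i (t - a + τ) τ :=
    (hm₀.add hi).comp (f := fun τ => (t - a + τ, τ)) (by fun_prop)
  have hinflow : Continuous fun σ => i (t - σ) (a - σ) :=
    hi.comp (f := fun σ => (t - σ, a - σ)) (by fun_prop)
  have hmort : Continuous fun r => m₁ (t + r) (a + r) :=
    hm₁.comp (f := fun r => (t + r, a + r)) (by fun_prop)
  exact survivingInflow_hasDerivAt_characteristic
    (hinflow.mul (continuous_susceptibles_characteristic hμ)) hmort

/-- When the mortality `m₁` of the diseased is independent of disease duration,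
`C⋆(t,a) = ∫₀ᵃ i(t−δ,a−δ)·S(t−δ,a−δ)·exp(−∫₀^δ m₁(t−δ+τ,a−δ+τ) dτ) dδ`
solves the Cauchy problem `(∂ₜ+∂ₐ)γ = −m₁·γ + i·S` with `γ(t−a,0) = 0`. -/
theorem keiding_Cstar_solves_pde_duration_independent
    (m₀ i m₁ : ℝ → ℝ → ℝ)
    (hm₀ : Continuous fun q : ℝ × ℝ => m₀ q.1 q.2)
    (hi : Continuous fun q : ℝ × ℝ => i q.1 q.2)
    (hm₁ : Continuous fun q : ℝ × ℝ => m₁ q.1 q.2)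
    (S₀ : ℝ → ℝ) (hS₀ : Continuous S₀)
    (S : ℝ → ℝ → ℝ)
    (hS : ∀ t a : ℝ, S t a = S₀ (t - a) *
      Real.exp (-∫ τ in (0:ℝ)..a, (m₀ (t - a + τ) τ + i (t - a + τ) τ)))
    (Cstar : ℝ → ℝ → ℝ)
    (hCstar : ∀ t a : ℝ, Cstar t a =
      ∫ δ in (0:ℝ)..a, i (t - δ) (a - δ) * S (t - δ) (a - δ) *
        Real.exp (-∫ τ in (0:ℝ)..δ, m₁ (t - δ + τ) (a - δ + τ))) :
    (∀ t : ℝ, Cstar t 0 = 0) ∧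
    (∀ t a : ℝ, 0 < a →
      HasDerivAt (fun s : ℝ => Cstar (t + s) (a + s))
        (-m₁ t a * Cstar t a + i t a * S t a) 0) :=
  keiding_Cstar_solves_pde_duration_independent_general m₀ i m₁ hm₀ hi hm₁ S₀ S hS Cstar hCstar
end

section
/- Let m₀, i, m₁ : ℝ → ℝ → ℝ be continuous (m₁ independent of disease duration) and S₀ : ℝ → ℝ be continuous. Define S(t,a) := S₀(t−a)·exp(−∫₀ᵃ (m₀(t−a+τ,τ) + i(t−a+τ,τ)) dτ). Suppose γ : ℝ × ℝ → ℝ satisfies γ(u,0) = 0 for all u ∈ ℝ, and for every u ∈ ℝ the function α ↦ γ(u+α, α) is differentiable on [0,∞) with derivative −m₁(u+α, α)·γ(u+α, α) + i(u+α, α)·S(u+α, α). Then for all t ∈ ℝ and a ≥ 0, γ(t,a) = ∫₀ᵃ i(t−δ, a−δ)·S(t−δ, a−δ)·exp(−∫₀^δ m₁(t−δ+τ, a−δ+τ) dτ) dδ. (Uniqueness and explicit solution of the Cauchy problem (∂ₜ+∂ₐ)γ = −m₁·γ + i·S, γ(t−a,0) = 0.) -/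
/-!
Along the characteristic `α ↦ (t - a + α, α)` the equation is the linear ODE `y' = -m₁ y + i S`
with `y 0 = 0`, which variation of constants solves uniquely; the substitution `δ = a - s` turns
that formula into the stated one.
-/

open intervalIntegral Set Real

/-- Multiplying by `exp (∫ M)` turns `y' = -M y + g` into `(y · exp ∫ M)' = g · exp ∫ M`. -/
theorem variation_of_constants {y M g : ℝ → ℝ} {x₀ a : ℝ} (hxa : x₀ ≤ a)
    (hM : Continuous M) (hg : Continuous g)
    (hy : ∀ x ∈ Icc x₀ a, HasDerivWithinAt y (-M x * y x + g x) (Icc x₀ a) x) :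
    y a = y x₀ * exp (-∫ x in x₀..a, M x) + ∫ s in x₀..a, g s * exp (-∫ x in s..a, M x) := by
  set P : ℝ → ℝ := fun x => ∫ τ in x₀..x, M τ
  have hPderiv : ∀ x, HasDerivAt P (M x) x := fun x =>
    (hM.integral_hasStrictDerivAt x₀ x).hasDerivAt
  have hPcont : Continuous P := continuous_iff_continuousAt.2 fun x => (hPderiv x).continuousAt
  have hprod : ∀ x ∈ Icc x₀ a,
      HasDerivWithinAt (fun x => y x * exp (P x)) (g x * exp (P x)) (Icc x₀ a) x := by
    intro x hx
    exact ((hy x hx).mul (hPderiv x).hasDerivWithinAt.exp).congr_deriv (by ring)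
  have hftc : ∫ s in x₀..a, g s * exp (P s) = y a * exp (P a) - y x₀ * exp (P x₀) :=
    integral_eq_sub_of_hasDerivAt_of_le hxa (fun x hx => (hprod x hx).continuousWithinAt)
      (fun x hx => (hprod x (Ioo_subset_Icc_self hx)).hasDerivAt (Icc_mem_nhds hx.1 hx.2))
      ((hg.mul (continuous_exp.comp hPcont)).intervalIntegrable x₀ a)
  have hsub : ∀ s, ∫ x in s..a, M x = P a - P s := fun s =>
    (integral_interval_sub_left (hM.intervalIntegrable x₀ a) (hM.intervalIntegrable x₀ s)).symm
  have hP₀ : P x₀ = 0 := integral_same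
  have hrhs : ∫ s in x₀..a, g s * exp (-∫ x in s..a, M x)
      = (∫ s in x₀..a, g s * exp (P s)) * exp (-P a) := by
    rw [← integral_mul_const]
    refine integral_congr fun s _ => ?_
    rw [hsub, neg_sub, sub_eq_add_neg, exp_add, mul_assoc, mul_comm (exp _)]
  rw [hrhs, hftc, hP₀, exp_zero, exp_neg]
  field_simp
  ring

theorem integral_along_characteristic (F m : ℝ → ℝ → ℝ) (t a : ℝ) :
    ∫ δ in (0:ℝ)..a, F (t - δ) (a - δ) * exp (-∫ τ in (0:ℝ)..δ, m (t - δ + τ) (a - δ + τ))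
      = ∫ s in (0:ℝ)..a, F (t - a + s) s * exp (-∫ τ in s..a, m (t - a + τ) τ) := by
  have hinner : ∀ δ, ∫ τ in (0:ℝ)..δ, m (t - δ + τ) (a - δ + τ)
      = ∫ τ in (a - δ)..a, m (t - a + τ) τ := by
    intro δ
    have hshift := integral_comp_add_left (fun τ => m (t - a + τ) τ) (a - δ) (a := 0) (b := δ)
    rw [add_zero, sub_add_cancel] at hshift
    rw [← hshift]
    exact integral_congr fun τ _ => by ring_nf
  have hreflect := integral_comp_sub_left
    (fun s => F (t - a + s) s * exp (-∫ τ in s..a, m (t - a + τ) τ)) a (a := 0) (b := a)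
  rw [sub_self, sub_zero] at hreflect
  rw [← hreflect]
  exact integral_congr fun δ _ => by simp only [hinner]; ring_nf

theorem keiding_Cstar_pde_unique_general
    (m₀ i m₁ : ℝ → ℝ → ℝ)
    (hm₀ : Continuous fun q : ℝ × ℝ => m₀ q.1 q.2)
    (hi : Continuous fun q : ℝ × ℝ => i q.1 q.2)
    (hm₁ : Continuous fun q : ℝ × ℝ => m₁ q.1 q.2)
    (S₀ : ℝ → ℝ)
    (S : ℝ → ℝ → ℝ)
    (hS : ∀ t a : ℝ, S t a = S₀ (t - a) *
      Real.exp (-∫ τ in (0:ℝ)..a, (m₀ (t - a + τ) τ + i (t - a + τ) τ)))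
    (γ : ℝ → ℝ → ℝ)
    (hinit : ∀ u : ℝ, γ u 0 = 0)
    (hderiv : ∀ u : ℝ, ∀ α ∈ Set.Ici (0:ℝ),
      HasDerivWithinAt (fun β : ℝ => γ (u + β) β)
        (-m₁ (u + α) α * γ (u + α) α + i (u + α) α * S (u + α) α)
        (Set.Ici (0:ℝ)) α) :
    ∀ t a : ℝ, 0 ≤ a →
      γ t a = ∫ δ in (0:ℝ)..a, i (t - δ) (a - δ) * S (t - δ) (a - δ) *
        Real.exp (-∫ τ in (0:ℝ)..δ, m₁ (t - δ + τ) (a - δ + τ)) := by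
  intro t a ha
  have hchar : Continuous fun α : ℝ => (t - a + α, α) := by fun_prop
  have hS_char : Continuous fun α => S (t - a + α) α := by
    simp only [hS, add_sub_cancel_right]
    have hhazard : Continuous fun τ => m₀ (t - a + τ) τ + i (t - a + τ) τ :=
      (hm₀.comp hchar).add (hi.comp hchar)
    exact continuous_const.mul
      (continuous_exp.comp (continuous_primitive (hhazard.intervalIntegrable · ·) 0).neg)
  have hsol := variation_of_constants (y := fun α => γ (t - a + α) α)
    (M := fun α => m₁ (t - a + α) α) (g := fun α => i (t - a + α) α * S (t - a + α) α) ha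
    (hm₁.comp hchar) ((hi.comp hchar).mul hS_char)
    (fun α hα => (hderiv (t - a) α hα.1).mono Icc_subset_Ici_self)
  rw [integral_along_characteristic (fun p q => i p q * S p q) m₁]
  simpa only [add_zero, hinit, zero_mul, zero_add, sub_add_cancel] using hsol

/-- Uniqueness and explicit solution of the Cauchy problem
`(∂ₜ+∂ₐ)γ = −m₁·γ + i·S`, `γ(t−a,0) = 0`, in the duration-independent case:
any solution `γ` equals
`∫₀ᵃ i(t−δ,a−δ)·S(t−δ,a−δ)·exp(−∫₀^δ m₁(t−δ+τ,a−δ+τ) dτ) dδ` for `a ≥ 0`. -/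
theorem keiding_Cstar_pde_unique
    (m₀ i m₁ : ℝ → ℝ → ℝ)
    (hm₀ : Continuous fun q : ℝ × ℝ => m₀ q.1 q.2)
    (hi : Continuous fun q : ℝ × ℝ => i q.1 q.2)
    (hm₁ : Continuous fun q : ℝ × ℝ => m₁ q.1 q.2)
    (S₀ : ℝ → ℝ) (hS₀ : Continuous S₀)
    (S : ℝ → ℝ → ℝ)
    (hS : ∀ t a : ℝ, S t a = S₀ (t - a) *
      Real.exp (-∫ τ in (0:ℝ)..a, (m₀ (t - a + τ) τ + i (t - a + τ) τ)))
    (γ : ℝ → ℝ → ℝ)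
    (hinit : ∀ u : ℝ, γ u 0 = 0)
    (hderiv : ∀ u : ℝ, ∀ α ∈ Set.Ici (0:ℝ),
      HasDerivWithinAt (fun β : ℝ => γ (u + β) β)
        (-m₁ (u + α) α * γ (u + α) α + i (u + α) α * S (u + α) α)
        (Set.Ici (0:ℝ)) α) :
    ∀ t a : ℝ, 0 ≤ a →
      γ t a = ∫ δ in (0:ℝ)..a, i (t - δ) (a - δ) * S (t - δ) (a - δ) *
        Real.exp (-∫ τ in (0:ℝ)..δ, m₁ (t - δ + τ) (a - δ + τ)) :=
  keiding_Cstar_pde_unique_general m₀ i m₁ hm₀ hi hm₁ S₀ S hS γ hinit hderiv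
end

section
/- Let m₀, i, m₁ : ℝ → ℝ → ℝ be continuous (m₁ independent of disease duration) with i ≥ 0, and let S₀ : ℝ → ℝ be continuous with S₀ > 0. Define S(t,a) := S₀(t−a)·exp(−∫₀ᵃ (m₀(t−a+τ,τ) + i(t−a+τ,τ)) dτ), C⋆(t,a) := ∫₀ᵃ i(t−δ, a−δ)·S(t−δ, a−δ)·exp(−∫₀^δ m₁(t−δ+τ, a−δ+τ) dτ) dδ, and the prevalence odds π(t,a) := C⋆(t,a)/S(t,a). Then for every t ∈ ℝ and a > 0, the function s ↦ π(t+s, a+s) has derivative i(t,a) − π(t,a)·(m₁(t,a) − m₀(t,a) − i(t,a)) at s = 0. (The linear partial differential equation of Brunet and Struchiner: (∂ₜ+∂ₐ)π = i − π·(m₁ − m₀ − i).) -/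
/-!
Follow the birth cohort `u` along the characteristic `x ↦ (u + x, x)`. There
`S = S₀(u) e^{-∫₀ˣ (m₀ + i)}`, so `S' = -(m₀ + i) S`. Substituting the age at onset
`ρ = a - δ` in `C⋆` gives the Duhamel formula `C⋆(x) = ∫₀ˣ i S(ρ) e^{-∫_ρ^x m₁} dρ`, so
`C⋆' = i S - m₁ C⋆`. The quotient rule turns these two linear equations into the one for
`π = C⋆ / S`.
-/

section Characteristics

-- Scoped, because `open Real` would turn the variable `π` of the theorem into `Real.pi`.
open Real intervalIntegral

theorem Continuous.comp_characteristic {m : ℝ → ℝ → ℝ}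
    (hm : Continuous fun q : ℝ × ℝ => m q.1 q.2) (u : ℝ) : Continuous fun x => m (u + x) x :=
  hm.comp ((continuous_const.add continuous_id).prodMk continuous_id)

theorem hasDerivAt_const_mul_exp_neg_integral {f : ℝ → ℝ} (hf : Continuous f) (c x : ℝ) :
    HasDerivAt (fun x => c * exp (-∫ y in (0:ℝ)..x, f y))
      (-f x * (c * exp (-∫ y in (0:ℝ)..x, f y))) x := by
  have hF : HasDerivAt (fun x => -∫ y in (0:ℝ)..x, f y) (-f x) x :=
    (hf.integral_hasStrictDerivAt 0 x).hasDerivAt.neg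
  exact (hF.exp.const_mul c).congr_deriv (by ring)

theorem integral_mul_exp_neg_integral_eq {f : ℝ → ℝ} (j : ℝ → ℝ) (hf : Continuous f) (x : ℝ) :
    ∫ ρ in (0:ℝ)..x, j ρ * exp (-∫ y in ρ..x, f y) =
      exp (-∫ y in (0:ℝ)..x, f y) * ∫ ρ in (0:ℝ)..x, j ρ * exp (∫ y in (0:ℝ)..ρ, f y) := by
  rw [← integral_const_mul]
  refine integral_congr fun ρ _ => ?_
  rw [← integral_interval_sub_left (hf.intervalIntegrable 0 x) (hf.intervalIntegrable 0 ρ),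
    neg_sub, sub_eq_add_neg, exp_add]
  ring

theorem hasDerivAt_integral_mul_exp_neg_integral {f j : ℝ → ℝ} (hf : Continuous f)
    (hj : Continuous j) (x : ℝ) :
    HasDerivAt (fun x => ∫ ρ in (0:ℝ)..x, j ρ * exp (-∫ y in ρ..x, f y))
      (j x - f x * ∫ ρ in (0:ℝ)..x, j ρ * exp (-∫ y in ρ..x, f y)) x := by
  have hF : Continuous fun x => ∫ y in (0:ℝ)..x, f y :=
    continuous_primitive (fun _ _ => hf.intervalIntegrable _ _) 0
  have hG : HasDerivAt (fun x => ∫ ρ in (0:ℝ)..x, j ρ * exp (∫ y in (0:ℝ)..ρ, f y))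
      (j x * exp (∫ y in (0:ℝ)..x, f y)) x :=
    ((hj.mul hF.rexp).integral_hasStrictDerivAt 0 x).hasDerivAt
  have hE : HasDerivAt (fun x => exp (-∫ y in (0:ℝ)..x, f y))
      (-f x * exp (-∫ y in (0:ℝ)..x, f y)) x := by
    simpa only [one_mul] using hasDerivAt_const_mul_exp_neg_integral hf 1 x
  simp only [integral_mul_exp_neg_integral_eq j hf]
  refine (hE.mul hG).congr_deriv ?_
  rw [mul_left_comm (exp _), ← exp_add, neg_add_cancel, exp_zero]
  ring

variable {m₀ i m₁ : ℝ → ℝ → ℝ} {S₀ : ℝ → ℝ} {S Cstar : ℝ → ℝ → ℝ}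

theorem susceptibles_along_characteristic
    (hS : ∀ t a : ℝ, S t a = S₀ (t - a) *
      exp (-∫ τ in (0:ℝ)..a, (m₀ (t - a + τ) τ + i (t - a + τ) τ))) (u x : ℝ) :
    S (u + x) x = S₀ u * exp (-∫ τ in (0:ℝ)..x, (m₀ (u + τ) τ + i (u + τ) τ)) := by
  rw [hS, add_sub_cancel_right]

theorem diseased_along_characteristic
    (hCstar : ∀ t a : ℝ, Cstar t a =
      ∫ δ in (0:ℝ)..a, i (t - δ) (a - δ) * S (t - δ) (a - δ) *
        exp (-∫ τ in (0:ℝ)..δ, m₁ (t - δ + τ) (a - δ + τ))) (u x : ℝ) :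
    Cstar (u + x) x =
      ∫ ρ in (0:ℝ)..x, i (u + ρ) ρ * S (u + ρ) ρ * exp (-∫ y in ρ..x, m₁ (u + y) y) := by
  have hρ := integral_comp_sub_left
    (fun ρ => i (u + ρ) ρ * S (u + ρ) ρ * exp (-∫ y in ρ..x, m₁ (u + y) y)) (a := 0) (b := x) x
  rw [sub_self, sub_zero] at hρ
  rw [hCstar, ← hρ]
  refine integral_congr fun δ _ => ?_
  have hτ := integral_comp_add_left (fun y => m₁ (u + y) y) (a := 0) (b := δ) (x - δ)
  simp only [add_zero, sub_add_cancel, ← add_assoc] at hτ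
  simp only [add_sub_assoc, hτ]

theorem hasDerivAt_susceptibles_along_characteristic
    (hm₀ : Continuous fun q : ℝ × ℝ => m₀ q.1 q.2) (hi : Continuous fun q : ℝ × ℝ => i q.1 q.2)
    (hS : ∀ t a : ℝ, S t a = S₀ (t - a) *
      exp (-∫ τ in (0:ℝ)..a, (m₀ (t - a + τ) τ + i (t - a + τ) τ))) (u x : ℝ) :
    HasDerivAt (fun x => S (u + x) x) (-(m₀ (u + x) x + i (u + x) x) * S (u + x) x) x := by
  simpa only [susceptibles_along_characteristic hS, Pi.add_apply] using
    hasDerivAt_const_mul_exp_neg_integral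
      ((hm₀.comp_characteristic u).add (hi.comp_characteristic u)) (S₀ u) x

theorem hasDerivAt_diseased_along_characteristic
    (hm₁ : Continuous fun q : ℝ × ℝ => m₁ q.1 q.2) (hi : Continuous fun q : ℝ × ℝ => i q.1 q.2)
    {u : ℝ} (hS : Continuous fun x => S (u + x) x)
    (hCstar : ∀ t a : ℝ, Cstar t a =
      ∫ δ in (0:ℝ)..a, i (t - δ) (a - δ) * S (t - δ) (a - δ) *
        exp (-∫ τ in (0:ℝ)..δ, m₁ (t - δ + τ) (a - δ + τ))) (x : ℝ) :
    HasDerivAt (fun x => Cstar (u + x) x)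
      (i (u + x) x * S (u + x) x - m₁ (u + x) x * Cstar (u + x) x) x := by
  simpa only [diseased_along_characteristic hCstar, Pi.mul_apply] using
    hasDerivAt_integral_mul_exp_neg_integral (hm₁.comp_characteristic u)
      ((hi.comp_characteristic u).mul hS) x

end Characteristics

theorem brunet_struchiner_odds_pde_general
    (m₀ i m₁ : ℝ → ℝ → ℝ)
    (hm₀ : Continuous fun q : ℝ × ℝ => m₀ q.1 q.2)
    (hi : Continuous fun q : ℝ × ℝ => i q.1 q.2)
    (hm₁ : Continuous fun q : ℝ × ℝ => m₁ q.1 q.2)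
    (S₀ : ℝ → ℝ) (hS₀_pos : ∀ u : ℝ, 0 < S₀ u)
    (S : ℝ → ℝ → ℝ)
    (hS : ∀ t a : ℝ, S t a = S₀ (t - a) *
      Real.exp (-∫ τ in (0:ℝ)..a, (m₀ (t - a + τ) τ + i (t - a + τ) τ)))
    (Cstar : ℝ → ℝ → ℝ)
    (hCstar : ∀ t a : ℝ, Cstar t a =
      ∫ δ in (0:ℝ)..a, i (t - δ) (a - δ) * S (t - δ) (a - δ) *
        Real.exp (-∫ τ in (0:ℝ)..δ, m₁ (t - δ + τ) (a - δ + τ)))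
    (π : ℝ → ℝ → ℝ)
    (hπ : ∀ t a : ℝ, π t a = Cstar t a / S t a) :
    ∀ t a : ℝ, 0 < a →
      HasDerivAt (fun s : ℝ => π (t + s) (a + s))
        (i t a - π t a * (m₁ t a - m₀ t a - i t a)) 0 := by
  intro t a _
  obtain ⟨u, rfl⟩ : ∃ u, t = u + a := ⟨t - a, (sub_add_cancel t a).symm⟩
  have hS' := hasDerivAt_susceptibles_along_characteristic hm₀ hi hS u
  have hC := hasDerivAt_diseased_along_characteristic hm₁ hi
    (continuous_iff_continuousAt.2 fun x => (hS' x).continuousAt) hCstar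
  have hπ' : ∀ x, HasDerivAt (fun x => π (u + x) x)
      (i (u + x) x - π (u + x) x * (m₁ (u + x) x - m₀ (u + x) x - i (u + x) x)) x := fun x => by
    have hS_ne : S (u + x) x ≠ 0 := by
      rw [hS]
      exact (mul_pos (hS₀_pos _) (Real.exp_pos _)).ne'
    simp only [hπ]
    refine ((hC x).div (hS' x) hS_ne).congr_deriv ?_
    field_simp
    ring
  simpa only [add_zero, add_assoc] using (hπ' (a + 0)).comp_const_add a 0

/-- Linear PDE of Brunet and Struchiner for the prevalence odds in the
duration-independent case:
`(∂ₜ+∂ₐ) π = i − π·(m₁ − m₀ − i)`. -/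
theorem brunet_struchiner_odds_pde
    (m₀ i m₁ : ℝ → ℝ → ℝ)
    (hm₀ : Continuous fun q : ℝ × ℝ => m₀ q.1 q.2)
    (hi : Continuous fun q : ℝ × ℝ => i q.1 q.2)
    (hi_nonneg : ∀ t a : ℝ, 0 ≤ i t a)
    (hm₁ : Continuous fun q : ℝ × ℝ => m₁ q.1 q.2)
    (S₀ : ℝ → ℝ) (hS₀ : Continuous S₀) (hS₀_pos : ∀ u : ℝ, 0 < S₀ u)
    (S : ℝ → ℝ → ℝ)
    (hS : ∀ t a : ℝ, S t a = S₀ (t - a) *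
      Real.exp (-∫ τ in (0:ℝ)..a, (m₀ (t - a + τ) τ + i (t - a + τ) τ)))
    (Cstar : ℝ → ℝ → ℝ)
    (hCstar : ∀ t a : ℝ, Cstar t a =
      ∫ δ in (0:ℝ)..a, i (t - δ) (a - δ) * S (t - δ) (a - δ) *
        Real.exp (-∫ τ in (0:ℝ)..δ, m₁ (t - δ + τ) (a - δ + τ)))
    (π : ℝ → ℝ → ℝ)
    (hπ : ∀ t a : ℝ, π t a = Cstar t a / S t a) :
    ∀ t a : ℝ, 0 < a →
      HasDerivAt (fun s : ℝ => π (t + s) (a + s))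
        (i t a - π t a * (m₁ t a - m₀ t a - i t a)) 0 :=
  brunet_struchiner_odds_pde_general m₀ i m₁ hm₀ hi hm₁ S₀ hS₀_pos S hS Cstar hCstar π hπ
end

section
/- Let m₀, i : ℝ → ℝ → ℝ be continuous with i ≥ 0, m₁ : ℝ → ℝ → ℝ → ℝ be continuous, and S₀ : ℝ → ℝ. Define S(t,a) := S₀(t−a)·exp(−∫₀ᵃ (m₀(t−a+τ,τ) + i(t−a+τ,τ)) dτ), M₁(t,a,d) := ∫₀^d m₁(t−d+τ, a−d+τ, τ) dτ, C(t,a,d) := i(t−d, a−d)·S(t−d, a−d)·exp(−M₁(t,a,d)), C⋆(t,a) := ∫₀ᵃ C(t,a,δ) dδ, N(t,a) := S(t,a) + C⋆(t,a), the prevalence p(t,a) := C⋆(t,a)/N(t,a), I(t,a) := ∫₀ᵃ i(t−a+τ, τ) dτ, and M₀(t,a) := ∫₀ᵃ m₀(t−a+τ, τ) dτ. Then for every t ∈ ℝ and a ≥ 0 with S₀(t−a) > 0: I(t,a) = ln S₀(t−a) − ln(1 − p(t,a)) − ln N(t,a) − M₀(t,a). -/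
/-- The cumulative incidence can be expressed through the prevalence and
demographic quantities:
`I(t,a) = ln S₀(t−a) − ln(1 − p(t,a)) − ln N(t,a) − M₀(t,a)`. -/
theorem keiding_cumulative_incidence_via_prevalence
    (m₀ i : ℝ → ℝ → ℝ)
    (hm₀ : Continuous fun q : ℝ × ℝ => m₀ q.1 q.2)
    (hi : Continuous fun q : ℝ × ℝ => i q.1 q.2)
    (hi_nonneg : ∀ t a : ℝ, 0 ≤ i t a)
    (m₁ : ℝ → ℝ → ℝ → ℝ)
    (hm₁ : Continuous fun q : ℝ × ℝ × ℝ => m₁ q.1 q.2.1 q.2.2)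
    (S₀ : ℝ → ℝ) (S : ℝ → ℝ → ℝ)
    (hS : ∀ t a : ℝ, S t a = S₀ (t - a) *
      Real.exp (-∫ τ in (0:ℝ)..a, (m₀ (t - a + τ) τ + i (t - a + τ) τ)))
    (M₁ : ℝ → ℝ → ℝ → ℝ)
    (hM₁ : ∀ t a d : ℝ, M₁ t a d =
      ∫ τ in (0:ℝ)..d, m₁ (t - d + τ) (a - d + τ) τ)
    (C : ℝ → ℝ → ℝ → ℝ)
    (hC : ∀ t a d : ℝ, C t a d =
      i (t - d) (a - d) * S (t - d) (a - d) * Real.exp (-M₁ t a d))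
    (Cstar : ℝ → ℝ → ℝ)
    (hCstar : ∀ t a : ℝ, Cstar t a = ∫ δ in (0:ℝ)..a, C t a δ)
    (N : ℝ → ℝ → ℝ)
    (hN : ∀ t a : ℝ, N t a = S t a + Cstar t a)
    (p : ℝ → ℝ → ℝ)
    (hp : ∀ t a : ℝ, p t a = Cstar t a / N t a)
    (I : ℝ → ℝ → ℝ)
    (hI : ∀ t a : ℝ, I t a = ∫ τ in (0:ℝ)..a, i (t - a + τ) τ)
    (M₀ : ℝ → ℝ → ℝ)
    (hM₀ : ∀ t a : ℝ, M₀ t a = ∫ τ in (0:ℝ)..a, m₀ (t - a + τ) τ) :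
    ∀ t a : ℝ, 0 ≤ a → 0 < S₀ (t - a) →
      I t a = Real.log (S₀ (t - a)) - Real.log (1 - p t a)
        - Real.log (N t a) - M₀ t a := by
  intro t a ha hS₀
  -- interval integrability of the two integrands
  have hcm : Continuous fun τ : ℝ => m₀ (t - a + τ) τ :=
    hm₀.comp (by continuity : Continuous fun τ : ℝ => ((t - a + τ, τ) : ℝ × ℝ))
  have hci : Continuous fun τ : ℝ => i (t - a + τ) τ :=
    hi.comp (by continuity : Continuous fun τ : ℝ => ((t - a + τ, τ) : ℝ × ℝ))
  have hsum : (∫ τ in (0:ℝ)..a, (m₀ (t - a + τ) τ + i (t - a + τ) τ))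
      = M₀ t a + I t a := by
    rw [hM₀, hI,
      intervalIntegral.integral_add (hcm.intervalIntegrable 0 a)
        (hci.intervalIntegrable 0 a)]
  have hSval : S t a = S₀ (t - a) * Real.exp (-(M₀ t a + I t a)) := by
    rw [hS, hsum]
  have hSpos : 0 < S t a := by
    rw [hSval]; positivity
  -- C t a d ≥ 0 for all d
  have hCnn : ∀ d : ℝ, 0 ≤ C t a d := by
    intro d
    have hS' : 0 < S (t - d) (a - d) := by
      rw [hS]
      have : t - d - (a - d) = t - a := by ring
      rw [this]
      positivity
    rw [hC]
    have := hi_nonneg (t - d) (a - d)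
    positivity
  have hCsnn : 0 ≤ Cstar t a := by
    rw [hCstar]
    exact intervalIntegral.integral_nonneg ha fun d _ => hCnn d
  have hNpos : 0 < N t a := by
    rw [hN]; linarith
  have h1p : 1 - p t a = S t a / N t a := by
    rw [hp]
    field_simp
    linarith [hN t a]
  have hlog1p : Real.log (1 - p t a) = Real.log (S t a) - Real.log (N t a) := by
    rw [h1p, Real.log_div hSpos.ne' hNpos.ne']
  have hlogS : Real.log (S t a) = Real.log (S₀ (t - a)) - (M₀ t a + I t a) := by
    rw [hSval, Real.log_mul hS₀.ne' (Real.exp_pos _).ne', Real.log_exp]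
    ring
  rw [hlog1p, hlogS]
  ring
end

section
/- Let m₀ : ℝ → ℝ → ℝ be continuous, let ī : ℝ → ℝ be continuous with ī ≥ 0, and set i(t,a) := ī(a) (incidence independent of calendar time). Let m₁ : ℝ → ℝ → ℝ → ℝ be continuous and S₀ : ℝ → ℝ be continuous with S₀ > 0. Define S(t,a) := S₀(t−a)·exp(−∫₀ᵃ (m₀(t−a+τ,τ) + ī(τ)) dτ), M₁(t,a,d) := ∫₀^d m₁(t−d+τ, a−d+τ, τ) dτ, C(t,a,d) := ī(a−d)·S(t−d, a−d)·exp(−M₁(t,a,d)), C⋆(t,a) := ∫₀ᵃ C(t,a,δ) dδ, N(t,a) := S(t,a) + C⋆(t,a), the prevalence p(t,a) := C⋆(t,a)/N(t,a), and M₀(t,a) := ∫₀ᵃ m₀(t−a+τ, τ) dτ. Then for every fixed t ∈ ℝ and every a₀ > 0, the function a ↦ ln S₀(t−a) − ln(1 − p(t,a)) − ln N(t,a) − M₀(t,a) is differentiable at a₀ with derivative ī(a₀). (The incidence can be recovered from the prevalence without knowledge of the duration dependence of m₁.) -/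
/-!
Since `1 - p = S / N`, the expression equals `ln S₀(t - a) - ln S(t, a) - M₀(t, a)`, in which the
diseased compartment, and with it `m₁`, has cancelled; by the formula for `S` this is
`∫₀ᵃ ī`, whose derivative at `a₀` is `ī(a₀)`. The cancellation `ln(S / N) = ln S - ln N`
needs `N > 0`, which is where `ī ≥ 0` enters.
-/

open Real Filter Topology

lemma log_one_sub_div_add {s c : ℝ} (hs : 0 < s) (hc : 0 ≤ c) :
    log (1 - c / (s + c)) = log s - log (s + c) := by
  have hsc : s + c ≠ 0 := by positivity
  rw [one_sub_div hsc, add_sub_cancel_right, log_div hs.ne' hsc]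

lemma log_mul_exp_neg {s : ℝ} (hs : s ≠ 0) (x : ℝ) : log (s * exp (-x)) = log s - x := by
  rw [log_mul hs (exp_pos _).ne', log_exp, sub_eq_add_neg]

theorem keiding_incidence_from_prevalence_time_independent_general
    (m₀ : ℝ → ℝ → ℝ)
    (hm₀ : Continuous fun q : ℝ × ℝ => m₀ q.1 q.2)
    (iBar : ℝ → ℝ) (hiBar : Continuous iBar) (hiBar_nonneg : ∀ a : ℝ, 0 ≤ iBar a)
    (S₀ : ℝ → ℝ) (hS₀_pos : ∀ u : ℝ, 0 < S₀ u)
    (S : ℝ → ℝ → ℝ)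
    (hS : ∀ t a : ℝ, S t a = S₀ (t - a) *
      Real.exp (-∫ τ in (0:ℝ)..a, (m₀ (t - a + τ) τ + iBar τ)))
    (M₁ : ℝ → ℝ → ℝ → ℝ)
    (C : ℝ → ℝ → ℝ → ℝ)
    (hC : ∀ t a d : ℝ, C t a d =
      iBar (a - d) * S (t - d) (a - d) * Real.exp (-M₁ t a d))
    (Cstar : ℝ → ℝ → ℝ)
    (hCstar : ∀ t a : ℝ, Cstar t a = ∫ δ in (0:ℝ)..a, C t a δ)
    (N : ℝ → ℝ → ℝ)
    (hN : ∀ t a : ℝ, N t a = S t a + Cstar t a)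
    (p : ℝ → ℝ → ℝ)
    (hp : ∀ t a : ℝ, p t a = Cstar t a / N t a)
    (M₀ : ℝ → ℝ → ℝ)
    (hM₀ : ∀ t a : ℝ, M₀ t a = ∫ τ in (0:ℝ)..a, m₀ (t - a + τ) τ) :
    ∀ t a₀ : ℝ, 0 < a₀ →
      HasDerivAt (fun a : ℝ => Real.log (S₀ (t - a)) - Real.log (1 - p t a)
        - Real.log (N t a) - M₀ t a) (iBar a₀) a₀ := by
  intro t a₀ ha₀
  have hS_pos (t a : ℝ) : 0 < S t a := hS t a ▸ mul_pos (hS₀_pos _) (exp_pos _)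
  have hC_nonneg (a d : ℝ) : 0 ≤ C t a d := by
    rw [hC]
    have := hiBar_nonneg (a - d)
    have := hS_pos (t - d) (a - d)
    positivity
  have hCstar_nonneg {a : ℝ} (ha : 0 ≤ a) : 0 ≤ Cstar t a :=
    hCstar t a ▸ intervalIntegral.integral_nonneg ha fun d _ => hC_nonneg a d
  have hlogS (a : ℝ) : log (S t a) = log (S₀ (t - a)) - M₀ t a - ∫ τ in (0:ℝ)..a, iBar τ := by
    have hm₀_line : Continuous fun τ => m₀ (t - a + τ) τ := by fun_prop
    rw [hS, log_mul_exp_neg (hS₀_pos _).ne', hM₀, intervalIntegral.integral_add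
      (hm₀_line.intervalIntegrable 0 a) (hiBar.intervalIntegrable 0 a)]
    ring
  have hexpr : ∀ a, 0 < a → log (S₀ (t - a)) - log (1 - p t a) - log (N t a) - M₀ t a =
      ∫ τ in (0:ℝ)..a, iBar τ := by
    intro a ha
    rw [hp, hN, log_one_sub_div_add (hS_pos t a) (hCstar_nonneg ha.le), hlogS]
    ring
  exact (hiBar.integral_hasStrictDerivAt 0 a₀).hasDerivAt.congr_of_eventuallyEq
    (by filter_upwards [eventually_gt_nhds ha₀] with a ha using hexpr a ha)

/-- When the incidence `i(t,a) = iBar(a)` is independent of calendar time, the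
age-specific incidence can be recovered from the prevalence without knowledge
of the duration dependence of `m₁`: for every fixed `t` and every `a₀ > 0`,
the function `a ↦ ln S₀(t−a) − ln(1 − p(t,a)) − ln N(t,a) − M₀(t,a)` is
differentiable at `a₀` with derivative `iBar(a₀)`. -/
theorem keiding_incidence_from_prevalence_time_independent
    (m₀ : ℝ → ℝ → ℝ)
    (hm₀ : Continuous fun q : ℝ × ℝ => m₀ q.1 q.2)
    (iBar : ℝ → ℝ) (hiBar : Continuous iBar) (hiBar_nonneg : ∀ a : ℝ, 0 ≤ iBar a)
    (i : ℝ → ℝ → ℝ) (hi : ∀ t a : ℝ, i t a = iBar a)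
    (m₁ : ℝ → ℝ → ℝ → ℝ)
    (hm₁ : Continuous fun q : ℝ × ℝ × ℝ => m₁ q.1 q.2.1 q.2.2)
    (S₀ : ℝ → ℝ) (hS₀ : Continuous S₀) (hS₀_pos : ∀ u : ℝ, 0 < S₀ u)
    (S : ℝ → ℝ → ℝ)
    (hS : ∀ t a : ℝ, S t a = S₀ (t - a) *
      Real.exp (-∫ τ in (0:ℝ)..a, (m₀ (t - a + τ) τ + iBar τ)))
    (M₁ : ℝ → ℝ → ℝ → ℝ)
    (hM₁ : ∀ t a d : ℝ, M₁ t a d =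
      ∫ τ in (0:ℝ)..d, m₁ (t - d + τ) (a - d + τ) τ)
    (C : ℝ → ℝ → ℝ → ℝ)
    (hC : ∀ t a d : ℝ, C t a d =
      iBar (a - d) * S (t - d) (a - d) * Real.exp (-M₁ t a d))
    (Cstar : ℝ → ℝ → ℝ)
    (hCstar : ∀ t a : ℝ, Cstar t a = ∫ δ in (0:ℝ)..a, C t a δ)
    (N : ℝ → ℝ → ℝ)
    (hN : ∀ t a : ℝ, N t a = S t a + Cstar t a)
    (p : ℝ → ℝ → ℝ)
    (hp : ∀ t a : ℝ, p t a = Cstar t a / N t a)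
    (M₀ : ℝ → ℝ → ℝ)
    (hM₀ : ∀ t a : ℝ, M₀ t a = ∫ τ in (0:ℝ)..a, m₀ (t - a + τ) τ) :
    ∀ t a₀ : ℝ, 0 < a₀ →
      HasDerivAt (fun a : ℝ => Real.log (S₀ (t - a)) - Real.log (1 - p t a)
        - Real.log (N t a) - M₀ t a) (iBar a₀) a₀ :=
  keiding_incidence_from_prevalence_time_independent_general m₀ hm₀ iBar hiBar hiBar_nonneg S₀
    hS₀_pos S hS M₁ C hC Cstar hCstar N hN p hp M₀ hM₀
end
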